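/- Consider the two-component screening problem with Θ^A = {0, 1}, X = {0, 1}, u^A(x, θ^A) = θ^A x, v^A(x, θ^A) = 2.5(1/2 − θ^A)x, costly component Θ^B = {−1, 0}, Y = {0, 1}, u^B(y, θ^B) = θ^B y, v^B = 0 (with y₀ = 0), and types uniformly distributed on the comonotone pairs {(0, −1), (1, 0)}. Then every IC and IR mechanism that involves no costly screening (y ≡ 0 and (x, t) depending only on θ^A) yields principal payoff at most 0, whereas the direct mechanism assigning (x, y, t) = (1, 0, 0) to type (0, −1) and (x, y, t) = (0, 1, −1) to type (1, 0) is IC and IR and yields principal payoff 1/8 > 0. -/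

import Mathlib

/-!
Without costly screening the two types differ only in `θ^A`, so incentive compatibility
forces the allocation to be monotone (`xL ≤ xH`), the wrong direction for the principal,
who gains `5/4` from serving the low type and loses `5/4` on the high type; together with
the low type's participation constraint `tL ≤ 0` this caps the payoff at `0`. The costly
instrument reverses this: `y = 1` is free for the high type but costs the low type `1`,
so it can be handed to the high type (with a transfer of `1`) to keep the low type from
mimicking, while the low type is served at price `0`.
-/

noncomputable section

/-- IC and IR for a direct mechanism in the two-component, two-type example.
Type L is `(θ^A, θ^B) = (0, −1)`, type H is `(1, 0)`; the agent's utility from a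
triple `(x, y, t)` at type `(θ^A, θ^B)` is `θ^A x + θ^B y − t`. -/
def ICIR19 (xL yL tL xH yH tH : ℝ) : Prop :=
  xL ∈ ({0, 1} : Set ℝ) ∧ xH ∈ ({0, 1} : Set ℝ) ∧
    yL ∈ ({0, 1} : Set ℝ) ∧ yH ∈ ({0, 1} : Set ℝ) ∧
    -- IC for type L = (0, −1) and for type H = (1, 0):
    (0 * xL + (-1) * yL - tL ≥ 0 * xH + (-1) * yH - tH) ∧
    (1 * xH + 0 * yH - tH ≥ 1 * xL + 0 * yL - tL) ∧
    -- IR: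
    (0 * xL + (-1) * yL - tL ≥ 0) ∧ (1 * xH + 0 * yH - tH ≥ 0)

/-- The principal's expected payoff: `E[2.5 (1/2 − θ^A) x + t]` over the two equally
likely types. -/
def Payoff19 (xL tL xH tH : ℝ) : ℝ :=
  (1 / 2) * (2.5 * (1 / 2 - 0) * xL + tL) + (1 / 2) * (2.5 * (1 / 2 - 1) * xH + tH)

theorem payoff19_nonpos_of_ICIR19 {xL tL xH tH : ℝ} (h : ICIR19 xL 0 tL xH 0 tH) :
    Payoff19 xL tL xH tH ≤ 0 := by
  obtain ⟨-, -, -, -, hIC_L, hIC_H, hIR_L, -⟩ := h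
  have htL : tL ≤ 0 := by linarith
  have ht_mono : tL ≤ tH := by linarith
  have hx_gap : tH - tL ≤ xH - xL := by linarith
  calc Payoff19 xL tL xH tH = (tL + tH - 5 / 4 * (xH - xL)) / 2 := by
        norm_num [Payoff19]; ring
    _ ≤ (tL + tH - 5 / 4 * (tH - tL)) / 2 := by linarith
    _ ≤ tL := by linarith
    _ ≤ 0 := htL

theorem ICIR19_screening : ICIR19 1 0 0 0 1 (-1) := by
  norm_num [ICIR19]

theorem payoff19_screening : Payoff19 1 0 0 (-1) = 1 / 8 := by
  norm_num [Payoff19]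

/-- **Costly screening can strictly help without a sorting condition on surplus.**
Every IC and IR mechanism with no costly screening (`y ≡ 0`) yields principal payoff
at most `0`, while the mechanism assigning `(1, 0, 0)` to type `(0, −1)` and
`(0, 1, −1)` to type `(1, 0)` is IC, IR, and yields payoff `1/8 > 0`. -/
theorem stmt19 :
    (∀ xL tL xH tH : ℝ, ICIR19 xL 0 tL xH 0 tH → Payoff19 xL tL xH tH ≤ 0) ∧
    ICIR19 1 0 0 0 1 (-1) ∧ Payoff19 1 0 0 (-1) = 1 / 8 ∧ (0 : ℝ) < 1 / 8 :=
  ⟨fun _ _ _ _ => payoff19_nonpos_of_ICIR19, ICIR19_screening, payoff19_screening,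
    by norm_num⟩
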